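/- arXiv:1508.03684 — 4 statements merged into one kernel-verified Lean document; each statement's English description precedes it below -/
import Mathlib

section
/- For every natural number m with m ≥ 1, one has \(t \cdot \sum_{k=m}^{\infty} 2k\,e^{-4tk^2} \to 1/4\) as \(t \to 0^+\). -/
open Filter

namespace ThetaAux

/-- The basic Gaussian term `e^{-4t(m+j)^2}`. -/
noncomputable def A (m : ℕ) (t : ℝ) (j : ℕ) : ℝ := Real.exp (-4 * t * ((m : ℝ) + j) ^ 2)

lemma A_pos (m : ℕ) (t : ℝ) (j : ℕ) : 0 < A m t j := Real.exp_pos _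

lemma one_le_c (m : ℕ) (hm : 1 ≤ m) (j : ℕ) : (1 : ℝ) ≤ (m : ℝ) + j := by
  have h1 : (1 : ℝ) ≤ (m : ℝ) := by exact_mod_cast hm
  have h2 : (0 : ℝ) ≤ (j : ℝ) := j.cast_nonneg
  linarith

lemma A_le_geom (m : ℕ) (hm : 1 ≤ m) {t : ℝ} (ht : 0 < t) (j : ℕ) :
    A m t j ≤ Real.exp (-4 * t) ^ j := by
  have h1 := one_le_c m hm j
  have h2 : (0 : ℝ) ≤ (j : ℝ) := j.cast_nonneg
  calc A m t j ≤ Real.exp ((j : ℝ) * (-4 * t)) := by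
        apply Real.exp_le_exp.2
        have h3 : (j : ℝ) ≤ ((m : ℝ) + j) ^ 2 := by nlinarith
        nlinarith [mul_le_mul_of_nonneg_left h3 (by linarith : (0:ℝ) ≤ 4 * t)]
    _ = Real.exp (-4 * t) ^ j := Real.exp_nat_mul _ _

lemma exp_lt_one' {t : ℝ} (ht : 0 < t) : Real.exp (-4 * t) < 1 := by
  rw [Real.exp_lt_one_iff]; linarith

lemma summable_A (m : ℕ) (hm : 1 ≤ m) {t : ℝ} (ht : 0 < t) : Summable (A m t) :=
  Summable.of_nonneg_of_le (fun j => (A_pos m t j).le) (A_le_geom m hm ht)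
    (summable_geometric_of_lt_one (Real.exp_nonneg _) (exp_lt_one' ht))

lemma summable_B (m : ℕ) (hm : 1 ≤ m) {t : ℝ} (ht : 0 < t) :
    Summable (fun j : ℕ => 2 * ((m : ℝ) + j) * A m t j) := by
  have hr : Real.exp (-4 * t) < 1 := exp_lt_one' ht
  have h1 : Summable (fun j : ℕ => (j : ℝ) * Real.exp (-4 * t) ^ j) := by
    simpa using summable_pow_mul_geometric_of_norm_lt_one 1
      (r := Real.exp (-4 * t))
      (by rw [Real.norm_eq_abs, abs_of_nonneg (Real.exp_nonneg _)]; exact hr)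
  have h2 : Summable (fun j : ℕ => (m : ℝ) * Real.exp (-4 * t) ^ j) :=
    (summable_geometric_of_lt_one (Real.exp_nonneg _) hr).mul_left _
  have hg : Summable (fun j : ℕ => 2 * ((m : ℝ) + j) * Real.exp (-4 * t) ^ j) := by
    have := (h2.add h1).mul_left 2
    apply this.congr
    intro j; ring
  refine Summable.of_nonneg_of_le (fun j => ?_) (fun j => ?_) hg
  · have := one_le_c m hm j
    have := (A_pos m t j).le
    nlinarith
  · have h1 := one_le_c m hm j
    have h2 := A_le_geom m hm ht j
    have h3 : (0 : ℝ) ≤ 2 * ((m : ℝ) + j) := by linarith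
    exact mul_le_mul_of_nonneg_left h2 h3

lemma A_succ (m : ℕ) (t : ℝ) (j : ℕ) :
    A m t (j + 1) = A m t j * Real.exp (-(4 * t * (2 * ((m : ℝ) + j) + 1))) := by
  unfold A
  rw [← Real.exp_add]
  congr 1
  push_cast
  ring

lemma hasSum_teles (m : ℕ) (hm : 1 ≤ m) {t : ℝ} (ht : 0 < t) :
    HasSum (fun j => A m t j - A m t (j + 1)) (A m t 0) := by
  have hnn : ∀ j, 0 ≤ A m t j - A m t (j + 1) := by
    intro j
    have h1 := one_le_c m hm j
    have h2 : A m t (j + 1) ≤ A m t j := by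
      unfold A
      apply Real.exp_le_exp.2
      push_cast
      nlinarith
    linarith
  rw [hasSum_iff_tendsto_nat_of_nonneg hnn]
  have hps : ∀ n, ∑ i ∈ Finset.range n, (A m t i - A m t (i + 1)) = A m t 0 - A m t n :=
    fun n => Finset.sum_range_sub' (A m t) n
  have h0 : Tendsto (A m t) atTop (nhds 0) := by
    apply squeeze_zero (fun j => (A_pos m t j).le) (A_le_geom m hm ht)
    exact tendsto_pow_atTop_nhds_zero_of_lt_one (Real.exp_nonneg _) (exp_lt_one' ht)
  simp only [hps]
  simpa using tendsto_const_nhds.sub h0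

lemma diff_le (m : ℕ) (hm : 1 ≤ m) {t : ℝ} (ht : 0 < t) (j : ℕ) :
    A m t j - A m t (j + 1) ≤ 4 * t * (2 * ((m : ℝ) + j) * A m t j + A m t j) := by
  have hc := one_le_c m hm j
  have hA := A_pos m t j
  have hu : (0 : ℝ) ≤ 4 * t * (2 * ((m : ℝ) + j) + 1) := by nlinarith
  have h1 : 1 - 4 * t * (2 * ((m : ℝ) + j) + 1) ≤ Real.exp (-(4 * t * (2 * ((m : ℝ) + j) + 1))) := by
    have := Real.add_one_le_exp (-(4 * t * (2 * ((m : ℝ) + j) + 1)))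
    linarith
  rw [A_succ]
  nlinarith

lemma diff_ge (m : ℕ) (hm : 1 ≤ m) {t : ℝ} (ht : 0 < t) (j : ℕ) :
    4 * t * (2 * ((m : ℝ) + (j + 1 : ℕ)) * A m t (j + 1) - A m t (j + 1))
      ≤ A m t j - A m t (j + 1) := by
  have hc := one_le_c m hm j
  have hA := A_pos m t (j + 1)
  have h1 : 4 * t * (2 * ((m : ℝ) + j) + 1) + 1 ≤ Real.exp (4 * t * (2 * ((m : ℝ) + j) + 1)) :=
    Real.add_one_le_exp _
  have hAj : A m t j = A m t (j + 1) * Real.exp (4 * t * (2 * ((m : ℝ) + j) + 1)) := by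
    rw [A_succ]
    rw [mul_assoc, ← Real.exp_add]
    simp
  have hcast : ((m : ℝ) + (j + 1 : ℕ)) = (m : ℝ) + j + 1 := by push_cast; ring
  rw [hcast, hAj]
  nlinarith

end ThetaAux

open ThetaAux in
/-- Leading small-`t` behavior of the theta-like sum: for `m ≥ 1`,
`t · ∑_{k=m}^∞ 2k e^{-4tk²} → 1/4` as `t → 0⁺`. The sum over `k ≥ m` is
indexed by `k = m + j`, `j : ℕ`. -/
theorem tendsto_t_mul_thetaSum (m : ℕ) (hm : 1 ≤ m) :
    Filter.Tendsto
      (fun t : ℝ =>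
        t * ∑' j : ℕ, 2 * ((m : ℝ) + j) * Real.exp (-4 * t * ((m : ℝ) + j) ^ 2))
      (nhdsWithin 0 (Set.Ioi 0)) (nhds (1 / 4)) := by
  -- notation
  set T : ℝ → ℝ := fun t => ∑' j : ℕ, 2 * ((m : ℝ) + j) * A m t j with hT
  set E : ℝ → ℝ := fun t => ∑' j : ℕ, A m t j with hE
  -- the constant from the `x^{-3/4}` bound
  set C : ℝ := ∑' j : ℕ, ((m : ℝ) + j) ^ (-(3 / 2) : ℝ) with hC
  have hCnn : 0 ≤ C := tsum_nonneg fun j => Real.rpow_nonneg (by positivity) _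
  set D : ℝ := (4 : ℝ) ^ (-(3 / 4) : ℝ) * C with hD
  have hDnn : 0 ≤ D := mul_nonneg (Real.rpow_nonneg (by norm_num) _) hCnn
  -- summability of the rpow series
  have hsumC : Summable (fun j : ℕ => ((m : ℝ) + j) ^ (-(3 / 2) : ℝ)) := by
    have base : Summable (fun n : ℕ => (n : ℝ) ^ (-(3 / 2) : ℝ)) :=
      Real.summable_nat_rpow.2 (by norm_num)
    have := (summable_nat_add_iff (f := fun n : ℕ => (n : ℝ) ^ (-(3 / 2) : ℝ)) m).2 base
    apply this.congr
    intro j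
    congr 1
    push_cast
    ring
  -- key sandwich for each t > 0
  have key : ∀ t : ℝ, t ∈ Set.Ioi (0 : ℝ) →
      (A m t 0 / 4 - t * E t ≤ t * T t ∧
       t * T t ≤ A m t 0 / 4 + t * (2 * (m : ℝ) * A m t 0) + t * E t ∧
       0 ≤ E t ∧ t * E t ≤ D * t ^ ((1 : ℝ) / 4)) := by
    intro t ht
    rw [Set.mem_Ioi] at ht
    have hsA := summable_A m hm ht
    have hsB := summable_B m hm ht
    have htel := hasSum_teles m hm ht
    have hEnn : 0 ≤ E t := tsum_nonneg fun j => (A_pos m t j).le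
    -- lower bound: A0 ≤ 4t(T+E)
    have hlow : A m t 0 ≤ 4 * t * (T t + E t) := by
      have hsum2 : Summable (fun j : ℕ => 4 * t * (2 * ((m : ℝ) + j) * A m t j + A m t j)) :=
        ((hsB.add hsA).mul_left (4 * t))
      have h1 : A m t 0 ≤ ∑' j : ℕ, 4 * t * (2 * ((m : ℝ) + j) * A m t j + A m t j) := by
        rw [← htel.tsum_eq]
        exact Summable.tsum_le_tsum (fun j => diff_le m hm ht j) htel.summable hsum2
      calc A m t 0 ≤ ∑' j : ℕ, 4 * t * (2 * ((m : ℝ) + j) * A m t j + A m t j) := h1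
        _ = 4 * t * (T t + E t) := by
            rw [tsum_mul_left, Summable.tsum_add hsB hsA]
    -- upper bound: 4t((T - B0) - (E - A0)) ≤ A0
    have hupp : 4 * t * ((T t - 2 * (m : ℝ) * A m t 0) - (E t - A m t 0)) ≤ A m t 0 := by
      have hsB' : Summable (fun j : ℕ => 2 * ((m : ℝ) + (j + 1 : ℕ)) * A m t (j + 1)) :=
        (summable_nat_add_iff 1).2 hsB
      have hsA' : Summable (fun j : ℕ => A m t (j + 1)) := (summable_nat_add_iff 1).2 hsA
      have hsum2 : Summable
          (fun j : ℕ => 4 * t * (2 * ((m : ℝ) + (j + 1 : ℕ)) * A m t (j + 1) - A m t (j + 1))) :=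
        (hsB'.sub hsA').mul_left (4 * t)
      have h1 : (∑' j : ℕ, 4 * t * (2 * ((m : ℝ) + (j + 1 : ℕ)) * A m t (j + 1) - A m t (j + 1)))
          ≤ A m t 0 := by
        rw [← htel.tsum_eq]
        exact Summable.tsum_le_tsum (fun j => diff_ge m hm ht j) hsum2 htel.summable
      have h2 : (∑' j : ℕ, 4 * t * (2 * ((m : ℝ) + (j + 1 : ℕ)) * A m t (j + 1) - A m t (j + 1)))
          = 4 * t * ((T t - 2 * (m : ℝ) * A m t 0) - (E t - A m t 0)) := by
        rw [tsum_mul_left, Summable.tsum_sub hsB' hsA']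
        have e1 : (∑' j : ℕ, 2 * ((m : ℝ) + (j + 1 : ℕ)) * A m t (j + 1))
            = T t - 2 * (m : ℝ) * A m t 0 := by
          have h := Summable.tsum_eq_zero_add hsB
          rw [hT]
          simp only
          rw [h]
          push_cast
          ring
        have e2 : (∑' j : ℕ, A m t (j + 1)) = E t - A m t 0 := by
          have h := Summable.tsum_eq_zero_add hsA
          rw [hE]
          simp only
          rw [h]
          ring
        rw [e1, e2]
      linarith [h2 ▸ h1]
    -- error bound: t * E t ≤ D * t^{1/4}
    have herr : t * E t ≤ D * t ^ ((1 : ℝ) / 4) := by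
      have hterm : ∀ j : ℕ, A m t j ≤ (4 * t) ^ (-(3 / 4) : ℝ) * ((m : ℝ) + j) ^ (-(3 / 2) : ℝ) := by
        intro j
        have hc := one_le_c m hm j
        have hcpos : (0 : ℝ) < (m : ℝ) + j := by linarith
        set x : ℝ := 4 * t * ((m : ℝ) + j) ^ 2 with hx
        have hxpos : 0 < x := by positivity
        -- e^{-x} ≤ x^{-3/4}
        have hxe : x ^ ((3 : ℝ) / 4) ≤ Real.exp x := by
          rcases le_total x 1 with h | h
          · have : x ^ ((3 : ℝ) / 4) ≤ 1 := Real.rpow_le_one hxpos.le h (by norm_num)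
            have : (1 : ℝ) ≤ Real.exp x := Real.one_le_exp hxpos.le
            linarith [Real.rpow_le_one hxpos.le h (by norm_num : (0:ℝ) ≤ 3/4)]
          · have h1 : x ^ ((3 : ℝ) / 4) ≤ x ^ (1 : ℝ) :=
              Real.rpow_le_rpow_of_exponent_le h (by norm_num)
            rw [Real.rpow_one] at h1
            have h2 := Real.add_one_le_exp x
            linarith
        have hexp : Real.exp (-x) ≤ x ^ (-(3 / 4) : ℝ) := by
          rw [Real.exp_neg, Real.rpow_neg hxpos.le]
          exact inv_anti₀ (Real.rpow_pos_of_pos hxpos _) hxe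
        have heq : x ^ (-(3 / 4) : ℝ)
            = (4 * t) ^ (-(3 / 4) : ℝ) * ((m : ℝ) + j) ^ (-(3 / 2) : ℝ) := by
          rw [hx, Real.mul_rpow (by positivity) (by positivity)]
          congr 1
          rw [← Real.rpow_natCast ((m : ℝ) + j) 2, ← Real.rpow_mul hcpos.le]
          norm_num
        calc A m t j = Real.exp (-x) := by unfold A; rw [hx]; congr 1; ring
          _ ≤ x ^ (-(3 / 4) : ℝ) := hexp
          _ = _ := heq
      have hEle : E t ≤ (4 * t) ^ (-(3 / 4) : ℝ) * C := by
        rw [hE, hC]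
        simp only
        rw [← tsum_mul_left]
        exact Summable.tsum_le_tsum hterm hsA (hsumC.mul_left _)
      have hpow : t * (4 * t) ^ (-(3 / 4) : ℝ) = (4 : ℝ) ^ (-(3 / 4) : ℝ) * t ^ ((1 : ℝ) / 4) := by
        rw [Real.mul_rpow (by norm_num) ht.le]
        rw [show t * ((4:ℝ) ^ (-(3/4) : ℝ) * t ^ (-(3/4) : ℝ))
            = (4:ℝ) ^ (-(3/4) : ℝ) * (t ^ (1:ℝ) * t ^ (-(3/4) : ℝ)) by rw [Real.rpow_one]; ring]
        rw [← Real.rpow_add ht]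
        norm_num
      calc t * E t ≤ t * ((4 * t) ^ (-(3 / 4) : ℝ) * C) := by
            apply mul_le_mul_of_nonneg_left hEle ht.le
        _ = (4 : ℝ) ^ (-(3 / 4) : ℝ) * t ^ ((1 : ℝ) / 4) * C := by rw [← mul_assoc, hpow]
        _ = D * t ^ ((1 : ℝ) / 4) := by rw [hD]; ring
    have hA0pos := A_pos m t 0
    have htA0 : 0 ≤ t * A m t 0 := mul_nonneg ht.le hA0pos.le
    have e3 : 4 * t * (T t + E t) = 4 * (t * T t) + 4 * (t * E t) := by ring
    have e4 : 4 * t * ((T t - 2 * (m : ℝ) * A m t 0) - (E t - A m t 0))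
        = 4 * (t * T t) - 4 * (t * (2 * (m : ℝ) * A m t 0)) - 4 * (t * E t)
          + 4 * (t * A m t 0) := by ring
    rw [e3] at hlow
    rw [e4] at hupp
    exact ⟨by linarith, by linarith, hEnn, herr⟩
  -- limits of the bounding functions
  have hA0 : Tendsto (fun t : ℝ => A m t 0) (nhdsWithin 0 (Set.Ioi 0)) (nhds 1) := by
    have hcont : Continuous (fun t : ℝ => A m t 0) := by
      unfold A
      exact Real.continuous_exp.comp (by fun_prop)
    have := hcont.tendsto 0
    have h0 : A m 0 0 = 1 := by unfold A; simp
    rw [h0] at this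
    exact this.mono_left nhdsWithin_le_nhds
  have hq : Tendsto (fun t : ℝ => t ^ ((1 : ℝ) / 4)) (nhdsWithin 0 (Set.Ioi 0)) (nhds 0) := by
    have hc : ContinuousAt (fun x : ℝ => x ^ ((1 : ℝ) / 4)) 0 :=
      Real.continuousAt_rpow_const 0 _ (Or.inr (by norm_num))
    have := hc.tendsto
    rw [Real.zero_rpow (by norm_num : (1:ℝ)/4 ≠ 0)] at this
    exact this.mono_left nhdsWithin_le_nhds
  have htid : Tendsto (fun t : ℝ => t) (nhdsWithin 0 (Set.Ioi 0)) (nhds 0) :=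
    tendsto_id.mono_left nhdsWithin_le_nhds
  have hlo : Tendsto (fun t : ℝ => A m t 0 / 4 - D * t ^ ((1 : ℝ) / 4))
      (nhdsWithin 0 (Set.Ioi 0)) (nhds (1 / 4)) := by
    have := (hA0.div_const 4).sub ((hq.const_mul D))
    simpa using this
  have hhi : Tendsto
      (fun t : ℝ => A m t 0 / 4 + t * (2 * (m : ℝ) * A m t 0) + D * t ^ ((1 : ℝ) / 4))
      (nhdsWithin 0 (Set.Ioi 0)) (nhds (1 / 4)) := by
    have h1 : Tendsto (fun t : ℝ => t * (2 * (m : ℝ) * A m t 0))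
        (nhdsWithin 0 (Set.Ioi 0)) (nhds 0) := by
      have := htid.mul (hA0.const_mul (2 * (m : ℝ)))
      simpa using this
    have := ((hA0.div_const 4).add h1).add (hq.const_mul D)
    simpa using this
  -- squeeze
  have hmain : Tendsto (fun t : ℝ => t * T t) (nhdsWithin 0 (Set.Ioi 0)) (nhds (1 / 4)) := by
    apply tendsto_of_tendsto_of_tendsto_of_le_of_le' hlo hhi
    · filter_upwards [self_mem_nhdsWithin] with t ht
      obtain ⟨h1, h2, h3, h4⟩ := key t ht
      linarith
    · filter_upwards [self_mem_nhdsWithin] with t ht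
      obtain ⟨h1, h2, h3, h4⟩ := key t ht
      linarith
  exact hmain
end

section
/- For every natural number m with m ≥ 1, as \(t \to 0^+\) one has \(\sum_{k=m}^{\infty} 2k\,e^{-4tk^2} = e^{-4m^2 t}\Big(\frac{1}{4t} + \big(m - \frac{1}{6}\big) + t\big(\frac{4}{3}m^2 - \frac{1}{15}\big)\Big) + O(t^2)\); that is, the difference of the left-hand side and the parenthesized expression times \(e^{-4m^2t}\) is \(O(t^2)\) as \(t \to 0^+\). -/
/-!
Euler–Maclaurin summation. With `x = 4t` and `f(u) = 2u e^{-xu²}`, whose primitive `-e^{-xu²}/x`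
vanishes at infinity, the Euler–Maclaurin formula of order six gives
`∑_{k ≥ m} f(k) = e^{-xm²}/x + f(m)/2 - f'(m)/12 + f'''(m)/720 - (B₆/6!) f⁽⁵⁾(m) + R`
with `|R| ≤ C ∫ |f⁽⁶⁾|`, and the first four terms are the stated main term up to
`e^{-xm²} x² (m²/15 - x m⁴/45) = O(x²)`. The error terms are `O(x²)` by scaling: `f` is
`-x⁻¹ d/du γ(√(2x) u)` for the Gaussian `γ(y) = e^{-y²/2}`, so `f⁽ʲ⁾(u) = -x⁻¹ √(2x)^{j+1} γ⁽ʲ⁺¹⁾(√(2x) u)`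
and `∫ |f⁽⁶⁾| = 8x² ∫ |γ⁽⁷⁾|`, while `|f⁽⁵⁾(m)| ≤ ∫ |f⁽⁶⁾|` because `f⁽⁵⁾` vanishes at infinity.
-/

open Real Filter Topology MeasureTheory Polynomial Finset
open scoped Nat

theorem ContDiff.hasDerivAt_iteratedDeriv {𝕜 F : Type*} [NontriviallyNormedField 𝕜]
    [NormedAddCommGroup F] [NormedSpace 𝕜 F] {f : 𝕜 → F} {n : ℕ} (hf : ContDiff 𝕜 (n + 1) f)
    (t : 𝕜) : HasDerivAt (iteratedDeriv n f) (iteratedDeriv (n + 1) f t) t := by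
  rw [iteratedDeriv_succ]
  exact (hf.differentiable_iteratedDeriv n (by norm_cast; omega) t).hasDerivAt

lemma abs_le_integral_abs_deriv {g g' : ℝ → ℝ} (hg : ∀ u, HasDerivAt g (g' u) u)
    (hint : Integrable g') (hlim : Tendsto g atTop (𝓝 0)) (a : ℝ) : |g a| ≤ ∫ u, |g' u| := by
  have h := integral_Ioi_of_hasDerivAt_of_tendsto (hg a).continuousAt.continuousWithinAt
    (fun u _ => hg u) hint.integrableOn hlim
  rw [zero_sub] at h
  rw [← abs_neg, ← h]
  exact abs_integral_le_integral_abs.trans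
    (setIntegral_le_integral hint.abs (Eventually.of_forall fun u => abs_nonneg _))

namespace EulerMaclaurin

noncomputable def bernoulliFun (n : ℕ) (t : ℝ) : ℝ := aeval t (Polynomial.bernoulli n) / n !

lemma hasDerivAt_bernoulliFun (n : ℕ) (t : ℝ) :
    HasDerivAt (bernoulliFun (n + 1)) (bernoulliFun n t) t := by
  have h := (Polynomial.hasDerivAt_aeval (Polynomial.bernoulli (n + 1)) t).div_const ((n + 1)! : ℝ)
  rw [derivative_bernoulli_add_one] at h
  refine h.congr_deriv ?_
  rw [bernoulliFun, Nat.factorial_succ, map_mul, map_add, map_natCast, map_one, Nat.cast_mul,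
    Nat.cast_succ]
  field_simp

lemma continuous_bernoulliFun (n : ℕ) : Continuous (bernoulliFun n) :=
  (Polynomial.continuous_aeval _).div_const _

lemma bernoulliFun_zero (t : ℝ) : bernoulliFun 0 t = 1 := by
  simp [bernoulliFun]

lemma bernoulliFun_apply_one (n : ℕ) : bernoulliFun n 1 = bernoulli' n / n ! := by
  rw [bernoulliFun, ← map_one (algebraMap ℚ ℝ), aeval_algebraMap_apply_eq_algebraMap_eval,
    bernoulli_eval_one]
  rfl

lemma bernoulliFun_succ_apply_zero (n : ℕ) :
    bernoulliFun (n + 1) 0 = bernoulliFun (n + 1) 1 - if n = 0 then 1 else 0 := by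
  rw [bernoulliFun_apply_one, bernoulliFun, ← map_zero (algebraMap ℚ ℝ),
    aeval_algebraMap_apply_eq_algebraMap_eval, bernoulli_eval_zero]
  rcases eq_or_ne n 0 with rfl | hn
  · norm_num [_root_.bernoulli_one]
  · simp [bernoulli_eq_bernoulli'_of_ne_one (show n + 1 ≠ 1 by omega), hn]

variable {f : ℝ → ℝ} {p : ℕ}

noncomputable def remainder (f : ℝ → ℝ) (p : ℕ) (a : ℝ) : ℝ :=
  ∫ t in a..a + 1, iteratedDeriv p f t * bernoulliFun p (t - a)

noncomputable def correction (f : ℝ → ℝ) (p : ℕ) (u : ℝ) : ℝ :=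
  ∑ j ∈ range p, (-1) ^ j * bernoulliFun (j + 1) 1 * iteratedDeriv j f u

lemma remainder_eq_sub_remainder_succ (hf : ContDiff ℝ (p + 1) f) (a : ℝ) :
    remainder f p a = iteratedDeriv p f (a + 1) * bernoulliFun (p + 1) 1
      - iteratedDeriv p f a * bernoulliFun (p + 1) 0 - remainder f (p + 1) a := by
  have hB : ∀ t, HasDerivAt (fun t => bernoulliFun (p + 1) (t - a)) (bernoulliFun p (t - a)) t :=
    fun t => by simpa using (hasDerivAt_bernoulliFun p (t - a)).comp_sub_const t a
  have h := intervalIntegral.integral_mul_deriv_eq_deriv_mul (a := a) (b := a + 1)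
    (fun t _ => hf.hasDerivAt_iteratedDeriv t) (fun t _ => hB t)
    ((hf.continuous_iteratedDeriv (p + 1) le_rfl).intervalIntegrable _ _)
    (((continuous_bernoulliFun p).comp (continuous_sub_right a)).intervalIntegrable _ _)
  simpa only [remainder, add_sub_cancel_left, sub_self] using h

lemma integral_eq_sum_add_remainder (hf : ContDiff ℝ p f) (a : ℝ) :
    ∫ t in a..a + 1, f t = ∑ j ∈ range p, (-1) ^ j * (iteratedDeriv j f (a + 1)
      * bernoulliFun (j + 1) 1 - iteratedDeriv j f a * bernoulliFun (j + 1) 0)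
      + (-1) ^ p * remainder f p a := by
  induction p with
  | zero => simp [remainder, bernoulliFun_zero]
  | succ p ih =>
    rw [ih (hf.of_le (by norm_cast; omega)), remainder_eq_sub_remainder_succ hf, sum_range_succ]
    ring

/-- The term `f a` comes from `B₁`, the only Bernoulli polynomial with `B₁(1) ≠ B₁(0)`. -/
lemma integral_eq_add_correction (hf : ContDiff ℝ p f) (hp : p ≠ 0) (a : ℝ) :
    ∫ t in a..a + 1, f t = f a + (correction f p (a + 1) - correction f p a)
      + (-1) ^ p * remainder f p a := by
  have hterm : ∀ j ∈ range p, (-1) ^ j * (iteratedDeriv j f (a + 1) * bernoulliFun (j + 1) 1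
      - iteratedDeriv j f a * bernoulliFun (j + 1) 0) = (if j = 0 then f a else 0)
      + ((-1) ^ j * bernoulliFun (j + 1) 1 * iteratedDeriv j f (a + 1)
        - (-1) ^ j * bernoulliFun (j + 1) 1 * iteratedDeriv j f a) := fun j _ => by
    rw [bernoulliFun_succ_apply_zero]
    split_ifs with hj
    · subst hj
      simp only [pow_zero, iteratedDeriv_zero, one_mul]
      ring
    · ring
  rw [integral_eq_sum_add_remainder hf, sum_congr rfl hterm, sum_add_distrib, sum_ite_eq',
    if_pos (mem_range.2 (Nat.pos_of_ne_zero hp)), sum_sub_distrib, correction, correction]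

lemma sum_range_eq_sub_correction_sub_remainder {G : ℝ → ℝ} (hf : ContDiff ℝ p f) (hp : p ≠ 0)
    (hG : ∀ u, HasDerivAt G (f u) u) (a : ℝ) (N : ℕ) :
    ∑ k ∈ range N, f (a + k) = (G (a + N) - G a) - (correction f p (a + N) - correction f p a)
      - (-1) ^ p * ∑ k ∈ range N, remainder f p (a + k) := by
  have hstep : ∀ k : ℕ, f (a + k) = (G (a + (k + 1 : ℕ)) - G (a + k))
      - (correction f p (a + (k + 1 : ℕ)) - correction f p (a + k))
      - (-1) ^ p * remainder f p (a + k) := fun k => by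
    have h := integral_eq_add_correction hf hp (a + k)
    rw [intervalIntegral.integral_eq_sub_of_hasDerivAt (fun t _ => hG t)
      (hf.continuous.intervalIntegrable _ _)] at h
    rw [Nat.cast_succ, ← add_assoc]
    linarith
  rw [sum_congr rfl fun k _ => hstep k, sum_sub_distrib, sum_sub_distrib, ← mul_sum,
    sum_range_sub (fun k : ℕ => G (a + k)), sum_range_sub (fun k : ℕ => correction f p (a + k))]
  simp

lemma abs_remainder_le {C : ℝ} (hf : ContDiff ℝ p f)
    (hC : ∀ t ∈ Set.Icc (0 : ℝ) 1, |bernoulliFun p t| ≤ C) (b : ℝ) :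
    |remainder f p b| ≤ C * ∫ u in b..b + 1, |iteratedDeriv p f u| := by
  have hcont := hf.continuous_iteratedDeriv p le_rfl
  rw [← intervalIntegral.integral_const_mul, remainder]
  refine (intervalIntegral.abs_integral_le_integral_abs (by linarith)).trans
    (intervalIntegral.integral_mono_on (by linarith) ?_ ?_ fun t ht => ?_)
  · exact (hcont.mul ((continuous_bernoulliFun p).comp (continuous_sub_right _))).abs
      |>.intervalIntegrable _ _
  · exact (hcont.abs.const_mul C).intervalIntegrable _ _
  · rw [abs_mul, mul_comm C]
    exact mul_le_mul_of_nonneg_left (hC _ ⟨by linarith [ht.1], by linarith [ht.2]⟩) (abs_nonneg _)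

lemma abs_sum_remainder_le {C : ℝ} (hf : ContDiff ℝ p f)
    (hC : ∀ t ∈ Set.Icc (0 : ℝ) 1, |bernoulliFun p t| ≤ C) (hint : Integrable (iteratedDeriv p f))
    (a : ℝ) (N : ℕ) :
    |∑ k ∈ range N, remainder f p (a + k)| ≤ C * ∫ u, |iteratedDeriv p f u| := by
  have hcont := hf.continuous_iteratedDeriv p le_rfl
  have hC0 : 0 ≤ C := (abs_nonneg _).trans (hC 0 ⟨le_rfl, zero_le_one⟩)
  calc |∑ k ∈ range N, remainder f p (a + k)|
      ≤ ∑ k ∈ range N, |remainder f p (a + k)| := abs_sum_le_sum_abs _ _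
    _ ≤ ∑ k ∈ range N, C * ∫ u in (a + k)..(a + (k + 1 : ℕ)), |iteratedDeriv p f u| :=
      sum_le_sum fun k _ => by
        simpa [Nat.cast_succ, add_assoc] using abs_remainder_le hf hC (a + k)
    _ = C * ∫ u in a..(a + N), |iteratedDeriv p f u| := by
      rw [← mul_sum, intervalIntegral.sum_integral_adjacent_intervals
        (a := fun k : ℕ => a + k) fun k _ => hcont.abs.intervalIntegrable _ _]
      simp
    _ ≤ C * ∫ u, |iteratedDeriv p f u| := by
      refine mul_le_mul_of_nonneg_left ?_ hC0
      rw [intervalIntegral.integral_of_le (by linarith [N.cast_nonneg (α := ℝ)])]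
      exact setIntegral_le_integral hint.abs (Eventually.of_forall fun u => abs_nonneg _)

theorem abs_tsum_sub_le {G : ℝ → ℝ} {L C : ℝ} (hf : ContDiff ℝ p f) (hp : p ≠ 0)
    (hG : ∀ u, HasDerivAt G (f u) u) (hGL : Tendsto G atTop (𝓝 L))
    (hdf : ∀ j < p, Tendsto (iteratedDeriv j f) atTop (𝓝 0))
    (hC : ∀ t ∈ Set.Icc (0 : ℝ) 1, |bernoulliFun p t| ≤ C) (hint : Integrable (iteratedDeriv p f))
    {a : ℝ} (hsum : Summable fun k : ℕ => f (a + k)) :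
    |∑' k : ℕ, f (a + k) - (L - G a + correction f p a)| ≤ C * ∫ u, |iteratedDeriv p f u| := by
  have hN : Tendsto (fun N : ℕ => a + N) atTop atTop :=
    tendsto_atTop_add_const_left _ _ tendsto_natCast_atTop_atTop
  have hcorr : Tendsto (fun N : ℕ => correction f p (a + N)) atTop (𝓝 0) := by
    simpa [correction] using tendsto_finsetSum (range p) fun j hj =>
      ((hdf j (mem_range.1 hj)).comp hN).const_mul ((-1) ^ j * bernoulliFun (j + 1) 1)
  have hbound := (((hGL.comp hN).sub_const L).abs.add hcorr.abs).add_const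
    (C * ∫ u, |iteratedDeriv p f u|)
  rw [sub_self, abs_zero, zero_add, zero_add] at hbound
  refine le_of_tendsto_of_tendsto' (hsum.hasSum.tendsto_sum_nat.sub_const _).abs hbound fun N => ?_
  have hR : |(-1 : ℝ) ^ p * ∑ k ∈ range N, remainder f p (a + k)|
      ≤ C * ∫ u, |iteratedDeriv p f u| := by
    simpa [abs_mul] using abs_sum_remainder_le hf hC hint a N
  rw [sum_range_eq_sub_correction_sub_remainder hf hp hG]
  calc _ = |(G (a + N) - L) - correction f p (a + N)
        - (-1) ^ p * ∑ k ∈ range N, remainder f p (a + k)| := by ring_nf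
    _ ≤ _ := (abs_sub _ _).trans (add_le_add (abs_sub _ _) hR)

lemma correction_six (f : ℝ → ℝ) (u : ℝ) :
    correction f 6 u = f u / 2 - iteratedDeriv 1 f u / 12 + iteratedDeriv 3 f u / 720
      - bernoulliFun 6 1 * iteratedDeriv 5 f u := by
  simp only [correction, sum_range_succ, sum_range_zero, Nat.reduceAdd, bernoulliFun_apply_one,
    bernoulli'_one, bernoulli'_two, bernoulli'_three, bernoulli'_four,
    bernoulli'_eq_zero_of_odd (n := 5) (by decide) (by norm_num), iteratedDeriv_zero, Nat.factorial]
  push_cast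
  ring

end EulerMaclaurin

lemma integrable_aeval_mul_gaussian {R : Type*} [CommSemiring R] [Algebra R ℝ] (q : R[X]) :
    Integrable fun y : ℝ => aeval y q * exp (-(y ^ 2 / 2)) := by
  simp_rw [aeval_eq_sum_range, sum_mul]
  refine integrable_finsetSum _ fun i _ => ?_
  have h := (integrable_rpow_mul_exp_neg_mul_sq (b := 1 / 2) (by norm_num)
    (s := i) (by linarith [i.cast_nonneg (α := ℝ)])).const_mul (algebraMap R ℝ (q.coeff i))
  refine h.congr (ae_of_all _ fun y => ?_)
  simp only [rpow_natCast, Algebra.smul_def]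
  ring_nf

lemma tendsto_aeval_mul_gaussian {R : Type*} [CommSemiring R] [Algebra R ℝ] (q : R[X]) :
    Tendsto (fun y : ℝ => aeval y q * exp (-(y ^ 2 / 2))) atTop (𝓝 0) := by
  have hterm : ∀ i, Tendsto (fun y : ℝ => q.coeff i • y ^ i * exp (-(y ^ 2 / 2))) atTop (𝓝 0) := by
    intro i
    have h := ((tendsto_rpow_abs_mul_exp_neg_mul_sq_cocompact (a := 1 / 2) (by norm_num) i).mono_left
      atTop_le_cocompact).const_mul (algebraMap R ℝ (q.coeff i))
    rw [mul_zero] at h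
    refine h.congr' ?_
    filter_upwards [eventually_ge_atTop 0] with y hy
    rw [abs_of_nonneg hy, rpow_natCast, Algebra.smul_def]
    ring_nf
  simp_rw [aeval_eq_sum_range, sum_mul]
  simpa using tendsto_finsetSum (range (q.natDegree + 1)) fun i _ => hterm i

lemma contDiff_gaussian : ContDiff ℝ ⊤ fun y : ℝ => exp (-(y ^ 2 / 2)) := by fun_prop

lemma iteratedDeriv_gaussian (n : ℕ) :
    iteratedDeriv n (fun y : ℝ => exp (-(y ^ 2 / 2)))
      = fun y => (-1) ^ n * aeval y (hermite n) * exp (-(y ^ 2 / 2)) := by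
  ext y
  rw [iteratedDeriv_eq_iterate, deriv_gaussian_eq_hermite_mul_gaussian]

lemma integrable_iteratedDeriv_gaussian (n : ℕ) :
    Integrable (iteratedDeriv n fun y : ℝ => exp (-(y ^ 2 / 2))) := by
  rw [iteratedDeriv_gaussian]
  simpa [mul_assoc] using (integrable_aeval_mul_gaussian (hermite n)).const_mul ((-1) ^ n)

lemma tendsto_iteratedDeriv_gaussian (n : ℕ) :
    Tendsto (iteratedDeriv n fun y : ℝ => exp (-(y ^ 2 / 2))) atTop (𝓝 0) := by
  rw [iteratedDeriv_gaussian]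
  simpa [mul_assoc] using (tendsto_aeval_mul_gaussian (hermite n)).const_mul ((-1) ^ n)

noncomputable def thetaTerm (x u : ℝ) : ℝ := 2 * u * exp (-x * u ^ 2)

section ThetaTerm

variable {x : ℝ}

lemma contDiff_thetaTerm : ContDiff ℝ ⊤ (thetaTerm x) := by
  unfold thetaTerm
  fun_prop

lemma hasDerivAt_neg_exp_neg_mul_sq_div (hx : 0 < x) (u : ℝ) :
    HasDerivAt (fun u => -exp (-x * u ^ 2) / x) (thetaTerm x u) u := by
  refine ((((hasDerivAt_pow 2 u).const_mul (-x)).exp.neg).div_const x).congr_deriv ?_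
  rw [thetaTerm]
  field_simp
  ring

lemma tendsto_neg_exp_neg_mul_sq_div (hx : 0 < x) :
    Tendsto (fun u => -exp (-x * u ^ 2) / x) atTop (𝓝 0) := by
  have h : Tendsto (fun u : ℝ => -x * u ^ 2) atTop atBot :=
    (tendsto_pow_atTop two_ne_zero).const_mul_atTop_of_neg (neg_neg_of_pos hx)
  simpa using ((tendsto_exp_atBot.comp h).neg).div_const x

lemma summable_thetaTerm (hx : 0 < x) {a : ℝ} (ha : 0 ≤ a) :
    Summable fun k : ℕ => thetaTerm x (a + k) := by
  have hmaj := ((summable_pow_mul_exp_neg_nat_mul 0 hx).mul_left (2 * a)).add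
    ((summable_pow_mul_exp_neg_nat_mul 1 hx).mul_left 2)
  refine hmaj.of_nonneg_of_le (fun k => by unfold thetaTerm; positivity) fun k => ?_
  have hk : (k : ℝ) ≤ (a + k) ^ 2 := by
    have : (k : ℝ) ≤ (k : ℝ) ^ 2 := by exact_mod_cast Nat.le_self_pow two_ne_zero k
    nlinarith [k.cast_nonneg (α := ℝ)]
  have hexp : exp (-x * (a + k) ^ 2) ≤ exp (-x * k) := exp_le_exp.2 (by nlinarith)
  calc thetaTerm x (a + k) ≤ 2 * (a + k) * exp (-x * k) :=
        mul_le_mul_of_nonneg_left hexp (by positivity)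
    _ = _ := by ring

lemma exp_neg_sq_sqrt_two_mul_mul_div_two (hx : 0 ≤ x) (u : ℝ) :
    exp (-((√(2 * x) * u) ^ 2 / 2)) = exp (-x * u ^ 2) := by
  rw [mul_pow, sq_sqrt (by positivity)]
  ring_nf

lemma thetaTerm_eq_deriv (hx : 0 < x) :
    thetaTerm x = fun u => -x⁻¹ * deriv (fun u => exp (-((√(2 * x) * u) ^ 2 / 2))) u := by
  ext u
  have h := congrFun (iteratedDeriv_comp_const_mul (n := 1) (contDiff_gaussian.of_le le_top)
    (√(2 * x))) u
  rw [iteratedDeriv_one, iteratedDeriv_gaussian] at h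
  rw [h, thetaTerm]
  simp only [hermite_one, aeval_X, pow_one, exp_neg_sq_sqrt_two_mul_mul_div_two hx.le]
  have hc : √(2 * x) * √(2 * x) = 2 * x := mul_self_sqrt (by positivity)
  field_simp
  linear_combination -u * hc

lemma iteratedDeriv_thetaTerm (hx : 0 < x) (j : ℕ) :
    iteratedDeriv j (thetaTerm x) = fun u => -x⁻¹ * √(2 * x) ^ (j + 1)
      * iteratedDeriv (j + 1) (fun y : ℝ => exp (-(y ^ 2 / 2))) (√(2 * x) * u) := by
  ext u
  rw [thetaTerm_eq_deriv hx, iteratedDeriv_const_mul_field, ← iteratedDeriv_succ',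
    iteratedDeriv_comp_const_mul (contDiff_gaussian.of_le le_top)]
  ring

lemma tendsto_iteratedDeriv_thetaTerm (hx : 0 < x) (j : ℕ) :
    Tendsto (iteratedDeriv j (thetaTerm x)) atTop (𝓝 0) := by
  rw [iteratedDeriv_thetaTerm hx]
  simpa using ((tendsto_iteratedDeriv_gaussian (j + 1)).comp
    (tendsto_id.const_mul_atTop (sqrt_pos.2 (by positivity : 0 < 2 * x)))).const_mul
    (-x⁻¹ * √(2 * x) ^ (j + 1))

lemma integrable_iteratedDeriv_thetaTerm (hx : 0 < x) (j : ℕ) :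
    Integrable (iteratedDeriv j (thetaTerm x)) := by
  rw [iteratedDeriv_thetaTerm hx]
  exact ((integrable_iteratedDeriv_gaussian (j + 1)).comp_mul_left'
    (sqrt_pos.2 (by positivity : 0 < 2 * x)).ne').const_mul _

lemma integral_abs_iteratedDeriv_thetaTerm (hx : 0 < x) (j : ℕ) :
    ∫ u, |iteratedDeriv j (thetaTerm x) u|
      = x⁻¹ * √(2 * x) ^ j * ∫ y, |iteratedDeriv (j + 1) (fun y : ℝ => exp (-(y ^ 2 / 2))) y| := by
  have hc : 0 < √(2 * x) := sqrt_pos.2 (by positivity)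
  simp_rw [iteratedDeriv_thetaTerm hx, abs_mul]
  rw [integral_const_mul, Measure.integral_comp_mul_left
    (fun y => |iteratedDeriv (j + 1) (fun y : ℝ => exp (-(y ^ 2 / 2))) y|), abs_neg, abs_inv,
    abs_of_pos hx, abs_pow, abs_of_pos hc, abs_inv, abs_of_pos hc, smul_eq_mul, pow_succ]
  field_simp

lemma aeval_hermite_two (y : ℝ) : aeval y (hermite 2) = y ^ 2 - 1 := by
  simp only [hermite_succ, hermite_zero, mul_one, derivative_one,
    sub_zero, derivative_X, aeval_sub, map_mul, aeval_X, map_one]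
  ring

lemma aeval_hermite_four (y : ℝ) : aeval y (hermite 4) = y ^ 4 - 6 * y ^ 2 + 3 := by
  simp only [hermite_succ, hermite_zero, mul_one, derivative_one,
    sub_zero, derivative_X, derivative_sub, derivative_mul, one_mul, aeval_sub,
    map_mul, aeval_X, map_one, map_add]
  ring

lemma iteratedDeriv_one_thetaTerm (hx : 0 < x) (u : ℝ) :
    iteratedDeriv 1 (thetaTerm x) u = (2 - 4 * x * u ^ 2) * exp (-x * u ^ 2) := by
  rw [iteratedDeriv_thetaTerm hx, iteratedDeriv_gaussian]
  simp only [Nat.reduceAdd, exp_neg_sq_sqrt_two_mul_mul_div_two hx.le, aeval_hermite_two]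
  have hc : √(2 * x) ^ 2 = 2 * x := sq_sqrt (by positivity)
  generalize √(2 * x) = c at hc ⊢
  obtain rfl : x = c ^ 2 / 2 := by linarith
  have hc0 : c ≠ 0 := by rintro rfl; simp at hx
  field_simp
  ring

lemma iteratedDeriv_three_thetaTerm (hx : 0 < x) (u : ℝ) :
    iteratedDeriv 3 (thetaTerm x) u
      = (-12 * x + 48 * x ^ 2 * u ^ 2 - 16 * x ^ 3 * u ^ 4) * exp (-x * u ^ 2) := by
  rw [iteratedDeriv_thetaTerm hx, iteratedDeriv_gaussian]
  simp only [Nat.reduceAdd, exp_neg_sq_sqrt_two_mul_mul_div_two hx.le, aeval_hermite_four]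
  have hc : √(2 * x) ^ 2 = 2 * x := sq_sqrt (by positivity)
  generalize √(2 * x) = c at hc ⊢
  obtain rfl : x = c ^ 2 / 2 := by linarith
  have hc0 : c ≠ 0 := by rintro rfl; simp at hx
  field_simp
  ring

lemma eulerMaclaurinMain_thetaTerm (hx : 0 < x) (a : ℝ) :
    exp (-x * a ^ 2) / x + thetaTerm x a / 2 - iteratedDeriv 1 (thetaTerm x) a / 12
      + iteratedDeriv 3 (thetaTerm x) a / 720
      = exp (-x * a ^ 2) * (1 / x + (a - 1 / 6) + x * (a ^ 2 / 3 - 1 / 60))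
        + x ^ 2 * exp (-x * a ^ 2) * (a ^ 2 / 15 - x * a ^ 4 / 45) := by
  rw [iteratedDeriv_one_thetaTerm hx, iteratedDeriv_three_thetaTerm hx, thetaTerm]
  field_simp
  ring

lemma abs_sq_mul_exp_mul_le (hx0 : 0 ≤ x) (hx1 : x ≤ 1) {a : ℝ} (ha : 0 ≤ a) :
    |x ^ 2 * exp (-x * a ^ 2) * (a ^ 2 / 15 - x * a ^ 4 / 45)| ≤ x ^ 2 * (a ^ 2 + a ^ 4) := by
  have hexp : exp (-x * a ^ 2) ≤ 1 := exp_le_one_iff.2 (by nlinarith)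
  have hpoly : |a ^ 2 / 15 - x * a ^ 4 / 45| ≤ a ^ 2 + a ^ 4 := by
    refine (abs_sub _ _).trans ?_
    rw [abs_of_nonneg (by positivity), abs_of_nonneg (by positivity)]
    gcongr <;> nlinarith [pow_nonneg ha 4]
  rw [abs_mul, abs_mul, abs_of_nonneg (sq_nonneg x), abs_of_pos (exp_pos _), mul_assoc]
  exact mul_le_mul_of_nonneg_left
    (by simpa using mul_le_mul hexp hpoly (abs_nonneg _) zero_le_one) (sq_nonneg x)

end ThetaTerm

theorem abs_tsum_thetaTerm_sub_le : ∃ K, ∀ x > 0, ∀ a ≥ 0,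
    |∑' k : ℕ, thetaTerm x (a + k) - (exp (-x * a ^ 2) / x + thetaTerm x a / 2
      - iteratedDeriv 1 (thetaTerm x) a / 12 + iteratedDeriv 3 (thetaTerm x) a / 720)|
      ≤ K * x ^ 2 := by
  obtain ⟨C, hC⟩ := isCompact_Icc.exists_bound_of_continuousOn
    (EulerMaclaurin.continuous_bernoulliFun 6).continuousOn (s := Set.Icc (0 : ℝ) 1)
  set I := ∫ y, |iteratedDeriv 7 (fun y : ℝ => exp (-(y ^ 2 / 2))) y|
  set B := EulerMaclaurin.bernoulliFun 6 1
  refine ⟨(C + |B|) * (8 * I), fun x hx a ha => ?_⟩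
  have hf : ContDiff ℝ 6 (thetaTerm x) := contDiff_thetaTerm.of_le le_top
  have hI : ∫ u, |iteratedDeriv 6 (thetaTerm x) u| = 8 * x ^ 2 * I := by
    rw [integral_abs_iteratedDeriv_thetaTerm hx, show √(2 * x) ^ 6 = (√(2 * x) ^ 2) ^ 3 by ring,
      sq_sqrt (by positivity)]
    field_simp
    ring
  have hEM := EulerMaclaurin.abs_tsum_sub_le hf (by norm_num)
    (hasDerivAt_neg_exp_neg_mul_sq_div hx) (tendsto_neg_exp_neg_mul_sq_div hx)
    (fun j _ => tendsto_iteratedDeriv_thetaTerm hx j) (fun t ht => by simpa using hC t ht)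
    (integrable_iteratedDeriv_thetaTerm hx 6) (summable_thetaTerm hx ha)
  have h5 := abs_le_integral_abs_deriv (fun u => hf.hasDerivAt_iteratedDeriv (n := 5) u)
    (integrable_iteratedDeriv_thetaTerm hx 6) (tendsto_iteratedDeriv_thetaTerm hx 5) a
  rw [EulerMaclaurin.correction_six, hI] at hEM
  rw [hI] at h5
  calc _ = |(∑' k : ℕ, thetaTerm x (a + k) - (0 - -exp (-x * a ^ 2) / x
        + (thetaTerm x a / 2 - iteratedDeriv 1 (thetaTerm x) a / 12
          + iteratedDeriv 3 (thetaTerm x) a / 720 - B * iteratedDeriv 5 (thetaTerm x) a)))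
        - B * iteratedDeriv 5 (thetaTerm x) a| := by ring_nf
    _ ≤ C * (8 * x ^ 2 * I) + |B| * (8 * x ^ 2 * I) := by
      refine (abs_sub _ _).trans (add_le_add hEM ?_)
      rw [abs_mul]
      exact mul_le_mul_of_nonneg_left h5 (abs_nonneg _)
    _ = _ := by ring

theorem thetaSum_asymptotic_general (m : ℕ) :
    (fun t : ℝ =>
        (∑' j : ℕ, 2 * ((m : ℝ) + j) * Real.exp (-4 * t * ((m : ℝ) + j) ^ 2))
          - Real.exp (-4 * (m : ℝ) ^ 2 * t) *
              (1 / (4 * t) + ((m : ℝ) - 1 / 6) + t * (4 / 3 * (m : ℝ) ^ 2 - 1 / 15)))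
      =O[nhdsWithin 0 (Set.Ioi 0)] fun t : ℝ => t ^ 2 := by
  obtain ⟨K, hK⟩ := abs_tsum_thetaTerm_sub_le
  refine Asymptotics.IsBigO.of_bound (16 * (K + m ^ 2 + m ^ 4)) ?_
  filter_upwards [Ioo_mem_nhdsGT (by norm_num : (0 : ℝ) < 1 / 4)] with t ⟨ht0, ht1⟩
  have hx : 0 < 4 * t := by positivity
  have hsum : ∑' j : ℕ, 2 * ((m : ℝ) + j) * exp (-4 * t * ((m : ℝ) + j) ^ 2)
      = ∑' k : ℕ, thetaTerm (4 * t) (m + k) := by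
    simp only [thetaTerm, neg_mul]
  rw [hsum, norm_of_nonneg (sq_nonneg t), norm_eq_abs]
  calc _ = |(∑' k : ℕ, thetaTerm (4 * t) (m + k) - (exp (-(4 * t) * m ^ 2) / (4 * t)
          + thetaTerm (4 * t) m / 2 - iteratedDeriv 1 (thetaTerm (4 * t)) m / 12
          + iteratedDeriv 3 (thetaTerm (4 * t)) m / 720))
        + (4 * t) ^ 2 * exp (-(4 * t) * m ^ 2) * (m ^ 2 / 15 - 4 * t * m ^ 4 / 45)| := by
        rw [eulerMaclaurinMain_thetaTerm hx]
        ring_nf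
    _ ≤ K * (4 * t) ^ 2 + (4 * t) ^ 2 * (m ^ 2 + m ^ 4) :=
      (abs_add_le _ _).trans (add_le_add (hK _ hx _ m.cast_nonneg)
        (abs_sq_mul_exp_mul_le hx.le (by linarith) m.cast_nonneg))
    _ = _ := by ring

/-- Two-term asymptotic expansion of the theta-like sum as `t → 0⁺`:
`∑_{k=m}^∞ 2k e^{-4tk²} = e^{-4m²t}(1/(4t) + (m - 1/6) + t(4m²/3 - 1/15)) + O(t²)`.
The sum over `k ≥ m` is indexed by `k = m + j`, `j : ℕ`. -/
theorem thetaSum_asymptotic (m : ℕ) (hm : 1 ≤ m) :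
    (fun t : ℝ =>
        (∑' j : ℕ, 2 * ((m : ℝ) + j) * Real.exp (-4 * t * ((m : ℝ) + j) ^ 2))
          - Real.exp (-4 * (m : ℝ) ^ 2 * t) *
              (1 / (4 * t) + ((m : ℝ) - 1 / 6) + t * (4 / 3 * (m : ℝ) ^ 2 - 1 / 15)))
      =O[nhdsWithin 0 (Set.Ioi 0)] fun t : ℝ => t ^ 2 :=
  thetaSum_asymptotic_general m
end

section
/- Let m be an integer and let f : ℝ → ℝ be continuously differentiable on \([m,\infty)\), with f integrable on \([m,\infty)\), f' integrable on \([m,\infty)\), and \(f(x) \to 0\) as \(x \to \infty\). Then the series \(\sum_{k=m}^{\infty} f(k)\) converges and \(\sum_{k=m}^{\infty} f(k) = \int_m^{\infty} f(x)\,dx + \frac{1}{2} f(m) + \int_m^{\infty} \big(x - \lfloor x \rfloor - \tfrac12\big) f'(x)\,dx\). -/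
/-!
On each unit interval `(k, k + 1]` the function `(x - k - 1) f(x)` is an antiderivative of
`f + ({x} - 1) f'`, and it vanishes at `k + 1` and equals `-f(k)` at `k`; hence
`∫_k^{k+1} (f + ({x} - 1) f') = f(k)`. Summing over the partition of `(m, ∞)` into such
intervals gives `∑ f(k) = ∫_m^∞ (f + ({x} - 1) f')`, and the formula follows by writing
`{x} - 1 = ({x} - 1/2) - 1/2` and `∫_m^∞ f' = -f(m)`.
-/
open MeasureTheory Set Filter Function

theorem iUnion_Ioc_add_natCast {α : Type*} [Ring α] [LinearOrder α] [IsStrictOrderedRing α]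
    [FloorSemiring α] (a : α) : ⋃ n : ℕ, Ioc (a + n) (a + n + 1) = Ioi a := by
  ext x
  simp only [mem_iUnion, mem_Ioc, mem_Ioi]
  constructor
  · rintro ⟨n, hn, -⟩
    exact lt_of_le_of_lt (le_add_of_nonneg_right n.cast_nonneg) hn
  · intro hx
    have hpos : 0 < x - a := sub_pos.2 hx
    obtain ⟨n, hn⟩ : ∃ n : ℕ, ⌈x - a⌉₊ = n + 1 :=
      Nat.exists_eq_add_one.2 (Nat.ceil_pos.2 hpos)
    have hlt := Nat.ceil_lt_add_one hpos.le
    have hle := Nat.le_ceil (x - a)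
    rw [hn, Nat.cast_add_one] at hlt hle
    refine ⟨n, lt_sub_iff_add_lt'.1 (lt_of_add_lt_add_right hlt), ?_⟩
    rw [add_assoc]
    exact sub_le_iff_le_add'.1 hle

theorem pairwise_disjoint_Ioc_add_natCast {α : Type*} [Ring α] [PartialOrder α] [IsOrderedRing α]
    (a : α) : Pairwise (Disjoint on fun n : ℕ => Ioc (a + n) (a + n + 1)) := by
  intro i j hij
  simpa only [onFun, Int.cast_natCast] using
    pairwise_disjoint_Ioc_add_intCast a (Nat.cast_injective.ne hij : (i : ℤ) ≠ j)

theorem MeasureTheory.IntegrableOn.hasSum_integral_Ioc_add_natCast {E : Type*}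
    [NormedAddCommGroup E] [NormedSpace ℝ E] {μ : Measure ℝ} {F : ℝ → E} {a : ℝ}
    (hF : IntegrableOn F (Ioi a) μ) :
    HasSum (fun n : ℕ => ∫ x in Ioc (a + n) (a + n + 1), F x ∂μ) (∫ x in Ioi a, F x ∂μ) := by
  rw [← iUnion_Ioc_add_natCast a] at hF ⊢
  exact hasSum_integral_iUnion (fun _ => measurableSet_Ioc)
    (pairwise_disjoint_Ioc_add_natCast a) hF

theorem MeasureTheory.Integrable.fract_sub_const_mul {μ : Measure ℝ} {g : ℝ → ℝ}
    (hg : Integrable g μ) (c : ℝ) : Integrable (fun x => (Int.fract x - c) * g x) μ := by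
  refine hg.bdd_mul (c := 1 + ‖c‖) (measurable_fract.sub_const c).aestronglyMeasurable
    (Eventually.of_forall fun x => (norm_sub_le _ _).trans ?_)
  rw [Real.norm_of_nonneg (Int.fract_nonneg x)]
  gcongr
  exact (Int.fract_lt_one x).le

theorem integral_Ioc_intCast_add_fract_sub_one_mul {f f' : ℝ → ℝ} {k : ℤ}
    (hf : ContinuousOn f (Icc k (k + 1)))
    (hderiv : ∀ x ∈ Ioo (k : ℝ) (k + 1), HasDerivAt f (f' x) x)
    (hf' : IntegrableOn f' (Ioc k (k + 1))) :
    ∫ x in Ioc (k : ℝ) (k + 1), (f x + (Int.fract x - 1) * f' x) = f k := by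
  have hk : (k : ℝ) ≤ k + 1 := by linarith
  have hfract : EqOn (fun x => f x + (Int.fract x - 1) * f' x) (fun x => f x + (x - k - 1) * f' x)
      (Ioo (k : ℝ) (k + 1)) := fun x hx => by
    dsimp only
    rw [(Int.fract_eq_iff (b := x - k)).2 ⟨by linarith [hx.1], by linarith [hx.2], k, by ring⟩]
  have hint : IntervalIntegrable (fun x => f x + (x - k - 1) * f' x) volume k (k + 1) :=
    (hf.intervalIntegrable_of_Icc hk).add
      (((intervalIntegrable_iff_integrableOn_Ioc_of_le hk).2 hf').continuousOn_mul (by fun_prop))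
  have hFTC := intervalIntegral.integral_eq_sub_of_hasDeriv_right_of_le hk
    (((continuousOn_id.sub continuousOn_const).sub continuousOn_const).mul hf)
    (fun x hx => (((hasDerivAt_id x).sub_const (k : ℝ)).sub_const 1 |>.mul (hderiv x hx)
      |>.hasDerivWithinAt.congr_deriv (by simp))) hint
  rw [← setIntegral_congr_set Ioo_ae_eq_Ioc, setIntegral_congr_fun measurableSet_Ioo hfract,
    setIntegral_congr_set Ioo_ae_eq_Ioc, ← intervalIntegral.integral_of_le hk, hFTC]
  simp

/-- First-order Euler–Maclaurin formula for an infinite tail: if `f` is `C¹` on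
`[m, ∞)`, with `f` and `f'` integrable on `[m, ∞)` and `f(x) → 0` as `x → ∞`,
then `∑_{k=m}^∞ f(k)` converges and equals
`∫_m^∞ f + f(m)/2 + ∫_m^∞ (x - ⌊x⌋ - 1/2) f'(x) dx`.
The sum over integers `k ≥ m` is indexed by `k = m + j`, `j : ℕ`. -/
theorem euler_maclaurin_tail (m : ℤ) (f : ℝ → ℝ)
    (hf : ContDiffOn ℝ 1 f (Set.Ici (m : ℝ)))
    (hfi : MeasureTheory.IntegrableOn f (Set.Ici (m : ℝ)))
    (hfi' : MeasureTheory.IntegrableOn (derivWithin f (Set.Ici (m : ℝ))) (Set.Ici (m : ℝ)))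
    (hf0 : Filter.Tendsto f Filter.atTop (nhds 0)) :
    Summable (fun j : ℕ => f ((m : ℝ) + j)) ∧
    (∑' j : ℕ, f ((m : ℝ) + j))
      = (∫ x in Set.Ici (m : ℝ), f x) + f m / 2
        + ∫ x in Set.Ici (m : ℝ), (x - ⌊x⌋ - 1 / 2) * derivWithin f (Set.Ici (m : ℝ)) x := by
  set f' := derivWithin f (Ici (m : ℝ))
  have hcont : ContinuousOn f (Ici (m : ℝ)) := hf.continuousOn
  have hderiv : ∀ x ∈ Ioi (m : ℝ), HasDerivAt f (f' x) x := fun x hx => by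
    rw [show f' x = deriv f x from derivWithin_of_mem_nhds (Ici_mem_nhds hx)]
    exact ((hf.differentiableOn one_ne_zero).differentiableAt (Ici_mem_nhds hx)).hasDerivAt
  have hsum : HasSum (fun j : ℕ => f (m + j))
      (∫ x in Ioi (m : ℝ), (f x + (Int.fract x - 1) * f' x)) := by
    refine ((hfi.add (hfi'.fract_sub_const_mul 1)).mono_set Ioi_subset_Ici_self
      |>.hasSum_integral_Ioc_add_natCast).congr_fun fun j => ?_
    have hmj : (m : ℝ) ≤ ((m + j : ℤ) : ℝ) := by push_cast; linarith [j.cast_nonneg (α := ℝ)]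
    have := integral_Ioc_intCast_add_fract_sub_one_mul (k := m + j)
      (hcont.mono fun x hx => hmj.trans hx.1) (fun x hx => hderiv x (hmj.trans_lt hx.1))
      (hfi'.mono_set fun x hx => hmj.trans hx.1.le)
    push_cast at this
    exact this.symm
  have hf'_integral : ∫ x in Ioi (m : ℝ), f' x = - f m := by
    simpa using integral_Ioi_of_hasDerivAt_of_tendsto (hcont _ self_mem_Ici) hderiv
      (hfi'.mono_set Ioi_subset_Ici_self) hf0
  refine ⟨hsum.summable, ?_⟩
  have hfi_Ioi := hfi.mono_set Ioi_subset_Ici_self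
  have hfi'_Ioi := hfi'.mono_set Ioi_subset_Ici_self
  have hsplit : ∀ x, f x + (Int.fract x - 1) * f' x
      = f x + (Int.fract x - 1 / 2) * f' x + (-(1 / 2)) * f' x := fun x => by ring
  simp_rw [Int.self_sub_floor, integral_Ici_eq_integral_Ioi, hsum.tsum_eq, hsplit]
  have hrem := hfi'_Ioi.fract_sub_const_mul (1 / 2)
  rw [integral_add (by exact hfi_Ioi.add hrem) (hfi'_Ioi.const_mul _), integral_add hfi_Ioi hrem,
    integral_const_mul, hf'_integral]
  ring
end

section
/- Fix a real number m > 0 and a natural number i ≥ 1. For t > 0, let \(f_t(x) = 2x\,e^{-4tx^2}\). Then the (2i−1)-th derivative of \(f_t\) with respect to x, evaluated at x = m, is \(O(t^{i-1})\) as \(t \to 0^+\). -/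
/-!
Substituting `y = √t x` gives `f_t(x) = t^{-1/2} g(√t x)` with `g(y) = 2y e^{-4y²}`, hence
`f_t^{(2i-1)}(m) = t^{i-1} g^{(2i-1)}(√t m)`. The second factor tends to `g^{(2i-1)}(0)` as
`t → 0⁺`, so it is bounded.
-/

open Asymptotics Filter Topology Real

lemma two_mul_mul_exp_eq_rescale {t : ℝ} (ht : 0 < t) :
    (fun x : ℝ => 2 * x * exp (-4 * t * x ^ 2))
      = fun x => (√t)⁻¹ * (2 * (√t * x) * exp (-4 * (√t * x) ^ 2)) := by
  have hs : √t ≠ 0 := (sqrt_pos.2 ht).ne'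
  funext x
  rw [mul_pow, sq_sqrt ht.le]
  field_simp

lemma iteratedDeriv_two_mul_mul_exp (n : ℕ) {t : ℝ} (ht : 0 < t) (x : ℝ) :
    iteratedDeriv n (fun x : ℝ => 2 * x * exp (-4 * t * x ^ 2)) x
      = √t ^ n / √t * iteratedDeriv n (fun y : ℝ => 2 * y * exp (-4 * y ^ 2)) (√t * x) := by
  have hg : ContDiff ℝ n fun y : ℝ => 2 * y * exp (-4 * y ^ 2) := by fun_prop
  rw [two_mul_mul_exp_eq_rescale ht, iteratedDeriv_const_mul_field,
    iteratedDeriv_comp_const_mul hg]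
  ring

theorem iteratedDeriv_gaussian_isBigO_general (m : ℝ) (i : ℕ) (hi : 1 ≤ i) :
    (fun t : ℝ =>
        iteratedDeriv (2 * i - 1) (fun x : ℝ => 2 * x * Real.exp (-4 * t * x ^ 2)) m)
      =O[nhdsWithin 0 (Set.Ioi 0)] fun t : ℝ => t ^ (i - 1) := by
  set G := iteratedDeriv (2 * i - 1) fun y : ℝ => 2 * y * exp (-4 * y ^ 2)
  have hlim : Tendsto (fun t : ℝ => G (√t * m)) (𝓝[>] 0) (𝓝 (G (√0 * m))) :=
    (((ContDiff.continuous_iteratedDeriv' _ (by fun_prop)).comp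
      (continuous_sqrt.mul continuous_const)).tendsto 0).mono_left nhdsWithin_le_nhds
  have hscale : ∀ t > 0, √t ^ (2 * i - 1) / √t = t ^ (i - 1) := by
    intro t ht
    obtain ⟨k, rfl⟩ : ∃ k, i = k + 1 := ⟨i - 1, by omega⟩
    rw [show 2 * (k + 1) - 1 = 2 * k + 1 by omega, pow_succ, pow_mul, sq_sqrt ht.le,
      Nat.add_sub_cancel, mul_div_cancel_right₀ _ (sqrt_pos.2 ht).ne']
  have hbound : (fun t : ℝ => t ^ (i - 1) * G (√t * m)) =O[𝓝[>] 0] fun t : ℝ => t ^ (i - 1) := by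
    simpa using (isBigO_refl (fun t : ℝ => t ^ (i - 1)) _).mul (hlim.isBigO_one ℝ)
  refine hbound.congr' ?_ EventuallyEq.rfl
  filter_upwards [self_mem_nhdsWithin] with t ht
  rw [iteratedDeriv_two_mul_mul_exp _ ht, hscale t ht]

/-- For fixed `m > 0` and `i ≥ 1`, the `(2i-1)`-th `x`-derivative of
`f_t(x) = 2x e^{-4tx²}` at `x = m` is `O(t^{i-1})` as `t → 0⁺`. -/
theorem iteratedDeriv_gaussian_isBigO (m : ℝ) (hm : 0 < m) (i : ℕ) (hi : 1 ≤ i) :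
    (fun t : ℝ =>
        iteratedDeriv (2 * i - 1) (fun x : ℝ => 2 * x * Real.exp (-4 * t * x ^ 2)) m)
      =O[nhdsWithin 0 (Set.Ioi 0)] fun t : ℝ => t ^ (i - 1) :=
  iteratedDeriv_gaussian_isBigO_general m i hi
end
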